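/- Let K ⊆ [0,1] be closed and μ > 0. Then there is a closed K' ⊆ K with λ(K \ K') < μ such that for every i ∈ ℕ there exists γ > 0 with Ξ_{1/(i+1), γ}(K', K'), i.e., for every Z with λ(Z) < γ, H^r(K' \ Z) > H^r(K') − 1/(i+1). -/

import Mathlib

open MeasureTheory Set ENNReal

/-- The `r`-Hausdorff capacity of a set `X ⊆ ℝ`: the infimum of `∑ λ(I i)^r`
over all countable covers of `X` by closed intervals. -/
noncomputable def Hcap (r : ℝ) (X : Set ℝ) : ℝ≥0∞ :=
  ⨅ (I : ℕ → Set ℝ) (_ : ∀ i, ∃ a b : ℝ, I i = Set.Icc a b) (_ : X ⊆ ⋃ i, I i),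
    ∑' i, (volume (I i)) ^ r

/-- The relation `Ξ_{δ,ε}(X,Y)`: for every `Z` of Lebesgue (outer) measure less than `ε`,
`H^r(X ∩ Y \ Z) > H^r(Y) − δ` (phrased additively to avoid truncated subtraction). -/
def Xi (r δ ε : ℝ) (X Y : Set ℝ) : Prop :=
  ∀ Z : Set ℝ, volume Z < ENNReal.ofReal ε →
    Hcap r Y < Hcap r ((X ∩ Y) \ Z) + ENNReal.ofReal δ

/-! For closed `C`, let `h(t)` be the least value of `H^r` on a closed `F ⊆ C` with
`λ(C \ F) ≤ t`. The values `h(ν 2⁻ʲ)` increase with `j` and are bounded by `H^r(C) ≤ 1`, so some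
step `h(ν 2⁻ʲ⁻¹) < h(ν 2⁻ʲ) + δ/2` is small. A closed `F` almost attaining `h(ν 2⁻ʲ⁻¹)` is then
robust: if `λ(Z) < ν 2⁻ʲ⁻¹`, enlarging `Z` to an open set (outer regularity) leaves a closed
competitor for `h(ν 2⁻ʲ)`, so `H^r(F \ Z) > H^r(F) - δ`.

Iterating this with `δ = 1/(i+1)` and measure budgets that halve at each stage and stay below
every robustness threshold already obtained, the intersection `K'` of the resulting decreasing
sequence differs from each stage by less than that stage's threshold, and so inherits its
robustness. -/

lemma exists_seq_of_forall_exists {β : Type*} {P : β → Prop} {R : ℕ → β → β → Prop} {b : β}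
    (hb : P b) (h : ∀ n b, P b → ∃ b', P b' ∧ R n b b') :
    ∃ f : ℕ → β, f 0 = b ∧ ∀ n, P (f n) ∧ R n (f n) (f (n + 1)) := by
  choose g hgP hgR using h
  let f : ℕ → {b // P b} := fun n => Nat.rec ⟨b, hb⟩ (fun n p => ⟨g n p.1 p.2, hgP n p.1 p.2⟩) n
  exact ⟨fun n => (f n).1, rfl, fun n => ⟨(f n).2, hgR n _ _⟩⟩

lemma diff_iInter_subset_iUnion_diff_succ {α : Type*} {C : ℕ → Set α} (hC : Antitone C) (n : ℕ) :
    C n \ ⋂ m, C m ⊆ ⋃ k, C (n + k) \ C (n + k + 1) := by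
  rintro x ⟨hxn, hx⟩
  by_contra hnot
  simp only [mem_iUnion, mem_sdiff, not_exists, not_and, not_not] at hnot
  have hall : ∀ k, x ∈ C (n + k) := fun k => by
    induction k with
    | zero => exact hxn
    | succ k ih => exact hnot k ih
  exact hx (mem_iInter.2 fun m => hC (Nat.le_add_left m n) (hall m))

section Robust

variable {α : Type*} [MeasurableSpace α] {φ : Set α → ℝ≥0∞} {μ : Measure α}
  {C F K Z : Set α} {δ γ γ' ε ν s t : ℝ≥0∞}

def IsRobust (φ : Set α → ℝ≥0∞) (μ : Measure α) (δ γ : ℝ≥0∞) (F : Set α) : Prop :=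
  ∀ Z, μ Z < γ → φ F < φ (F \ Z) + δ

lemma IsRobust.mono_threshold (h : IsRobust φ μ δ γ F) (hγ : γ' ≤ γ) : IsRobust φ μ δ γ' F :=
  fun Z hZ => h Z (hZ.trans_le hγ)

lemma IsRobust.of_subset (hφ : Monotone φ) (hC : IsRobust φ μ δ γ C) (hKC : K ⊆ C)
    (hCK : μ (C \ K) ≤ ε) (hε : ε ≠ ∞) (hεγ : ε + ε ≤ γ) : IsRobust φ μ δ ε K := by
  intro Z hZ
  have hsub : C \ (Z ∪ C \ K) ⊆ K \ Z := fun x hx =>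
    ⟨by_contra fun hxK => hx.2 (Or.inr ⟨hx.1, hxK⟩), fun hxZ => hx.2 (Or.inl hxZ)⟩
  have hsmall : μ (Z ∪ C \ K) < γ := calc
    μ (Z ∪ C \ K) ≤ μ Z + μ (C \ K) := measure_union_le _ _
    _ < ε + ε := ENNReal.add_lt_add_of_lt_of_le (ne_top_of_le_ne_top hε hCK) hZ hCK
    _ ≤ γ := hεγ
  calc φ K ≤ φ C := hφ hKC
    _ < φ (C \ (Z ∪ C \ K)) + δ := hC _ hsmall
    _ ≤ φ (K \ Z) + δ := by gcongr; exact hφ hsub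

lemma exists_succ_lt_add_of_le_of_ne_top {a : ℕ → ℝ≥0∞} {M c : ℝ≥0∞} (ha : ∀ n, a n ≤ M)
    (hM : M ≠ ∞) (hc : c ≠ 0) : ∃ n, a (n + 1) < a n + c := by
  by_contra! h
  have hgrow : ∀ n : ℕ, n * c ≤ a n := by
    intro n
    induction n with
    | zero => simp
    | succ n ih => calc
        ((n + 1 : ℕ) : ℝ≥0∞) * c = n * c + c := by push_cast; ring
        _ ≤ a n + c := by gcongr
        _ ≤ a (n + 1) := h n
  obtain ⟨n, hn⟩ := ENNReal.exists_nat_mul_gt hc hM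
  exact (hn.trans_le ((hgrow n).trans (ha n))).false

lemma measure_diff_iInter_le_of_halving {C : ℕ → Set α} {ε : ℕ → ℝ≥0∞} (hC : Antitone C)
    (hCε : ∀ n, μ (C n \ C (n + 1)) ≤ ε n / 2) (hε : ∀ n, ε (n + 1) ≤ ε n / 2) (n : ℕ) :
    μ (C n \ ⋂ m, C m) ≤ ε n := by
  have hεk : ∀ k, ε (n + k) ≤ ε n * 2⁻¹ ^ k := by
    intro k
    induction k with
    | zero => simp
    | succ k ih => calc
        ε (n + (k + 1)) ≤ ε (n + k) * 2⁻¹ := (hε _).trans_eq (div_eq_mul_inv _ _)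
        _ ≤ ε n * 2⁻¹ ^ k * 2⁻¹ := by gcongr
        _ = ε n * 2⁻¹ ^ (k + 1) := by rw [pow_succ, mul_assoc]
  calc μ (C n \ ⋂ m, C m) ≤ ∑' k, μ (C (n + k) \ C (n + k + 1)) :=
        (measure_mono (diff_iInter_subset_iUnion_diff_succ hC n)).trans (measure_iUnion_le _)
    _ ≤ ∑' k, ε n * 2⁻¹ ^ k * 2⁻¹ := ENNReal.tsum_le_tsum fun k =>
        (hCε _).trans (by rw [div_eq_mul_inv]; gcongr; exact hεk k)
    _ = ε n := by
        rw [ENNReal.tsum_mul_right, ENNReal.tsum_mul_left, ENNReal.tsum_geometric_two, mul_assoc,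
          ENNReal.mul_inv_cancel two_ne_zero ofNat_ne_top, mul_one]

variable [TopologicalSpace α]

noncomputable def trimInf (φ : Set α → ℝ≥0∞) (μ : Measure α) (C : Set α) (t : ℝ≥0∞) : ℝ≥0∞ :=
  ⨅ (F : Set α) (_ : IsClosed F) (_ : F ⊆ C) (_ : μ (C \ F) ≤ t), φ F

lemma trimInf_le (hF : IsClosed F) (hFC : F ⊆ C) (ht : μ (C \ F) ≤ t) :
    trimInf φ μ C t ≤ φ F :=
  iInf₂_le_of_le F hF <| iInf₂_le hFC ht

lemma trimInf_add_le_diff [μ.OuterRegular] (hφ : Monotone φ) (hF : IsClosed F) (hFC : F ⊆ C)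
    (ht : μ (C \ F) ≤ t) (hZ : μ Z < s) : trimInf φ μ C (t + s) ≤ φ (F \ Z) := by
  obtain ⟨U, hZU, hU, hUs⟩ := Z.exists_isOpen_lt_of_lt s hZ
  have hmeas : μ (C \ (F \ U)) ≤ t + s := calc
    μ (C \ (F \ U)) ≤ μ (C \ F ∪ U) :=
      measure_mono (sdiff_sdiff_right ▸ union_subset_union_right _ inter_subset_right)
    _ ≤ μ (C \ F) + μ U := measure_union_le _ _
    _ ≤ t + s := add_le_add ht hUs.le
  calc trimInf φ μ C (t + s) ≤ φ (F \ U) := trimInf_le (hF.sdiff hU) (sdiff_subset.trans hFC) hmeas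
    _ ≤ φ (F \ Z) := hφ (sdiff_subset_sdiff_right hZU)

lemma exists_closed_isRobust_subset [μ.OuterRegular] (hφ : Monotone φ) (hC : IsClosed C)
    (hCφ : φ C ≠ ∞) (hν : ν ≠ 0) (hδ : δ ≠ 0) :
    ∃ C' ⊆ C, IsClosed C' ∧ μ (C \ C') ≤ ν ∧ ∃ γ ≠ 0, IsRobust φ μ δ γ C' := by
  set t : ℕ → ℝ≥0∞ := fun j => ν * 2⁻¹ ^ j
  have ht : ∀ j, t (j + 1) + t (j + 1) = t j := fun j => by
    rw [← mul_add, pow_succ, ← div_eq_mul_inv, ENNReal.add_halves]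
  have hle : ∀ u, trimInf φ μ C u ≤ φ C := fun u => trimInf_le hC subset_rfl (by simp)
  have hδ2 : δ / 2 ≠ 0 := (ENNReal.half_pos hδ).ne'
  obtain ⟨j, hj⟩ := exists_succ_lt_add_of_le_of_ne_top (fun j => hle (t j)) hCφ hδ2
  obtain ⟨F, hF, hFC, hFt, hφF⟩ : ∃ F, IsClosed F ∧ F ⊆ C ∧ μ (C \ F) ≤ t (j + 1) ∧
      φ F < trimInf φ μ C (t (j + 1)) + δ / 2 := by
    simpa only [trimInf, iInf_lt_iff, exists_prop] using
      ENNReal.lt_add_right (ne_top_of_le_ne_top hCφ (hle _)) hδ2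
  refine ⟨F, hFC, hF, hFt.trans ?_, t (j + 1), ?_, fun Z hZ => ?_⟩
  · exact mul_le_of_le_one_right' (pow_le_one₀ zero_le (ENNReal.inv_le_one.2 one_le_two))
  · exact mul_ne_zero hν (pow_ne_zero _ (ENNReal.inv_ne_zero.2 ofNat_ne_top))
  · calc φ F < trimInf φ μ C (t (j + 1)) + δ / 2 := hφF
      _ ≤ trimInf φ μ C (t j) + δ / 2 + δ / 2 := add_le_add_left hj.le _
      _ ≤ φ (F \ Z) + δ / 2 + δ / 2 := by
        gcongr; rw [← ht j]; exact trimInf_add_le_diff hφ hF hFC hFt hZ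
      _ = φ (F \ Z) + δ := by rw [add_assoc, ENNReal.add_halves]

lemma exists_closed_subset_forall_isRobust [μ.OuterRegular] (hφ : Monotone φ)
    (hK : IsClosed K) (hKφ : φ K ≠ ∞) {δ : ℕ → ℝ≥0∞} (hδ : ∀ n, δ n ≠ 0) (hε : ε ≠ 0)
    (hε' : ε ≠ ∞) :
    ∃ K' ⊆ K, IsClosed K' ∧ μ (K \ K') ≤ ε ∧ ∀ n, ∃ γ ≠ 0, IsRobust φ μ (δ n) γ K' := by
  obtain ⟨f, hf0, hf⟩ := exists_seq_of_forall_exists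
    (P := fun p : Set α × ℝ≥0∞ => IsClosed p.1 ∧ φ p.1 ≠ ∞ ∧ p.2 ≠ 0)
    (R := fun n p q => q.1 ⊆ p.1 ∧ μ (p.1 \ q.1) ≤ p.2 / 2 ∧ q.2 ≤ p.2 / 2 ∧
      ∃ γ, q.2 + q.2 ≤ γ ∧ IsRobust φ μ (δ n) γ q.1)
    (b := (K, ε)) ⟨hK, hKφ, hε⟩ fun n ⟨C, η⟩ ⟨hC, hCφ, hη0⟩ => by
      obtain ⟨C', hC'C, hC', hCC', γ, hγ, hrob⟩ :=
        exists_closed_isRobust_subset (μ := μ) hφ hC hCφ (ENNReal.half_pos hη0).ne' (hδ n)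
      refine ⟨(C', min η γ / 2), ⟨hC', ne_top_of_le_ne_top hCφ (hφ hC'C), ?_⟩, hC'C, hCC', ?_, γ,
        ?_, hrob⟩
      · exact (ENNReal.half_pos (lt_min (pos_iff_ne_zero.2 hη0) (pos_iff_ne_zero.2 hγ)).ne').ne'
      · exact ENNReal.div_le_div_right (min_le_left _ _) 2
      · rw [ENNReal.add_halves]; exact min_le_right _ _
  set C := fun n => (f n).1
  set η := fun n => (f n).2
  have hC : Antitone C := antitone_nat_of_succ_le fun n => (hf n).2.1
  have hη : Antitone η := antitone_nat_of_succ_le fun n => (hf n).2.2.2.1.trans ENNReal.half_le_self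
  have hdiff :=
    measure_diff_iInter_le_of_halving hC (fun n => (hf n).2.2.1) (fun n => (hf n).2.2.2.1)
  refine ⟨⋂ m, C m, iInter_subset_of_subset 0 (by simp [C, hf0]),
    isClosed_iInter fun n => (hf n).1.1, by simpa [C, η, hf0] using hdiff 0, fun n => ?_⟩
  obtain ⟨γ, hγ, hrob⟩ := (hf n).2.2.2.2
  have hηε : η (n + 1) ≤ ε := (hη (Nat.zero_le _)).trans_eq (by simp [η, hf0])
  exact ⟨η (n + 1), (hf (n + 1)).1.2.2,
    hrob.of_subset hφ (iInter_subset _ _) (hdiff (n + 1)) (ne_top_of_le_ne_top hε' hηε) hγ⟩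

end Robust

lemma Hcap_le_tsum {r : ℝ} {X : Set ℝ} {I : ℕ → Set ℝ} (hI : ∀ i, ∃ a b : ℝ, I i = Icc a b)
    (hX : X ⊆ ⋃ i, I i) : Hcap r X ≤ ∑' i, volume (I i) ^ r :=
  iInf₂_le_of_le I hI (iInf_le _ hX)

lemma Hcap_mono (r : ℝ) : Monotone (Hcap r) := fun _ _ hXY =>
  le_iInf₂ fun _ hI => le_iInf fun hY => Hcap_le_tsum hI (hXY.trans hY)

lemma Hcap_le_one {r : ℝ} (hr : 0 < r) {X : Set ℝ} (hX : X ⊆ Icc 0 1) : Hcap r X ≤ 1 := by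
  let I : ℕ → Set ℝ := fun i => if i = 0 then Icc 0 1 else Icc 1 1
  have hI : ∀ i, ∃ a b : ℝ, I i = Icc a b := fun i => by
    by_cases hi : i = 0 <;> simp only [I, hi, if_true, if_false] <;> exact ⟨_, _, rfl⟩
  have hsum : ∑' i, volume (I i) ^ r = 1 := by
    rw [tsum_eq_single 0 fun i hi => by simp [I, hi, ENNReal.zero_rpow_of_pos hr]]
    simp [I]
  exact (Hcap_le_tsum hI (hX.trans (subset_iUnion I 0))).trans_eq hsum

lemma xi_self_iff {r δ γ : ℝ} {X : Set ℝ} :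
    Xi r δ γ X X ↔ IsRobust (Hcap r) volume (ENNReal.ofReal δ) (ENNReal.ofReal γ) X := by
  simp only [Xi, inter_self, IsRobust]

theorem exists_stable_closed_subset_general (r : ℝ) (hr0 : 0 < r)
    (K : Set ℝ) (hKc : IsClosed K) (hK : K ⊆ Set.Icc 0 1) (μ : ℝ) (hμ : 0 < μ) :
    ∃ K' : Set ℝ, K' ⊆ K ∧ IsClosed K' ∧ volume (K \ K') < ENNReal.ofReal μ ∧
      ∀ i : ℕ, ∃ γ > 0, Xi r (1 / (i + 1)) γ K' K' := by
  have hμ' : ENNReal.ofReal μ ≠ 0 := (ENNReal.ofReal_pos.2 hμ).ne'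
  obtain ⟨K', hK'K, hK'c, hdiff, hrob⟩ := exists_closed_subset_forall_isRobust (μ := volume)
    (Hcap_mono r) hKc (ne_top_of_le_ne_top one_ne_top (Hcap_le_one hr0 hK))
    (δ := fun i : ℕ => ENNReal.ofReal (1 / (i + 1)))
    (fun i => (ENNReal.ofReal_pos.2 (by positivity)).ne')
    (ENNReal.half_pos hμ').ne' (ENNReal.div_ne_top ofReal_ne_top two_ne_zero)
  refine ⟨K', hK'K, hK'c, hdiff.trans_lt (ENNReal.half_lt_self hμ' ofReal_ne_top), fun i => ?_⟩
  obtain ⟨γ, hγ, hrobγ⟩ := hrob i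
  obtain ⟨g, -, hg, hgγ⟩ := ENNReal.lt_iff_exists_real_btwn.1 (pos_iff_ne_zero.2 hγ)
  exact ⟨g, ENNReal.ofReal_pos.1 hg, xi_self_iff.2 (hrobγ.mono_threshold hgγ.le)⟩

theorem exists_stable_closed_subset (r : ℝ) (hr0 : 0 < r) (hr1 : r < 1)
    (K : Set ℝ) (hKc : IsClosed K) (hK : K ⊆ Set.Icc 0 1) (μ : ℝ) (hμ : 0 < μ) :
    ∃ K' : Set ℝ, K' ⊆ K ∧ IsClosed K' ∧ volume (K \ K') < ENNReal.ofReal μ ∧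
      ∀ i : ℕ, ∃ γ > 0, Xi r (1 / (i + 1)) γ K' K' :=
  exists_stable_closed_subset_general r hr0 K hKc hK μ hμ
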